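/- arXiv:1208.2521 — 3 statements merged into one kernel-verified Lean document; each statement's English description precedes it below -/
import Mathlib

section
/- Let 0 < q < 1. The series F(z,w) := ∑_{k=0}^∞ (-1)^k q^{k(k-1)/2} (q^k w;q)_∞ z^k / (q;q)_k converges absolutely for all (z,w) ∈ ℂ², uniformly on compact subsets of ℂ²; the function F so defined is analytic on ℂ² and is symmetric: F(z,w) = F(w,z) for all z,w ∈ ℂ. Consequently, for z,w ∈ ℂ with w,z ∉ {q^{-j} : j = 0,1,2,...}, one has (w;q)_∞ · ₁φ₁(0;w;q,z) = (z;q)_∞ · ₁φ₁(0;z;q,w). -/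
open Complex Filter

/-- `(a;q)_k`, the finite q-shifted factorial. -/
noncomputable def qPoch (q : ℝ) (a : ℂ) (k : ℕ) : ℂ :=
  ∏ j ∈ Finset.range k, (1 - a * (q : ℂ) ^ j)

/-- `(a;q)_∞`, the infinite q-shifted factorial. -/
noncomputable def qPochInf (q : ℝ) (a : ℂ) : ℂ :=
  ∏' j : ℕ, (1 - a * (q : ℂ) ^ j)

/-- The k-th term of the entire series
`F(z,w) = ∑ (-1)^k q^{k(k-1)/2} (q^k w;q)_∞ z^k / (q;q)_k`. -/
noncomputable def Fterm (q : ℝ) (z w : ℂ) (k : ℕ) : ℂ :=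
  (-1) ^ k * (q : ℂ) ^ (k * (k - 1) / 2) * qPochInf q ((q : ℂ) ^ k * w) * z ^ k
    / qPoch q (q : ℂ) k

/-- `F(z,w) = (w;q)_∞ ₁φ₁(0;w;q,z)` as an entire function of `(z,w)`. -/
noncomputable def Fqb (q : ℝ) (z w : ℂ) : ℂ := ∑' k : ℕ, Fterm q z w k

/-- `₁φ₁(0;w;q,z)`. -/
noncomputable def phi11 (q : ℝ) (w z : ℂ) : ℂ :=
  ∑' k : ℕ, (-1) ^ k * (q : ℂ) ^ (k * (k - 1) / 2) * z ^ k /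
    (qPoch q w k * qPoch q (q : ℂ) k)


namespace QAux

lemma tri_succ (k : ℕ) : (k + 1) * k / 2 = k * (k - 1) / 2 + k := by
  have h2 : 2 ∣ k * (k - 1) := by
    rcases k with _ | j
    · simp
    · simpa [Nat.succ_sub_one, mul_comm] using (Nat.even_mul_succ_self j).two_dvd
  have h : (k + 1) * k = k * (k - 1) + 2 * k := by
    rcases k with _ | j
    · simp
    · simp only [Nat.succ_sub_one]; ring
  omega

/-- the real product `(q;q)_k` -/
noncomputable def pr (q : ℝ) (k : ℕ) : ℝ := ∏ j ∈ Finset.range k, (1 - q * q ^ j)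

variable {q : ℝ}

lemma factor_bound (hq0 : 0 < q) (hq1 : q < 1) (j : ℕ) : q * q ^ j ≤ q := by
  have h1 : q ^ j ≤ 1 := pow_le_one₀ hq0.le hq1.le
  nlinarith

lemma pr_pos (hq0 : 0 < q) (hq1 : q < 1) (k : ℕ) : 0 < pr q k :=
  Finset.prod_pos fun j _ => by have := factor_bound hq0 hq1 j; linarith

lemma pr_ge (hq0 : 0 < q) (hq1 : q < 1) (k : ℕ) : (1 - q) ^ k ≤ pr q k := by
  have : (1 - q) ^ k = ∏ _j ∈ Finset.range k, (1 - q) := by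
    rw [Finset.prod_const, Finset.card_range]
  rw [this]
  refine Finset.prod_le_prod (fun j _ => by linarith) fun j _ => ?_
  have := factor_bound hq0 hq1 j; linarith

lemma qPoch_q_eq (k : ℕ) : qPoch q (q : ℂ) k = ((pr q k : ℝ) : ℂ) := by
  simp [qPoch, pr]

/-- cast of general qPoch at real argument not needed; only q. -/
lemma qPoch_q_ne (hq0 : 0 < q) (hq1 : q < 1) (k : ℕ) : qPoch q (q : ℂ) k ≠ 0 := by
  rw [qPoch_q_eq]
  exact_mod_cast (pr_pos hq0 hq1 k).ne'

/-- coefficient `e k = (-1)^k q^{k(k-1)/2} / (q;q)_k` -/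
noncomputable def ec (q : ℝ) (k : ℕ) : ℂ :=
  (-1) ^ k * (q : ℂ) ^ (k * (k - 1) / 2) / qPoch q (q : ℂ) k

lemma norm_ec_le (hq0 : 0 < q) (hq1 : q < 1) (k : ℕ) :
    ‖ec q k‖ ≤ q ^ (k * (k - 1) / 2) / (1 - q) ^ k := by
  rw [ec, qPoch_q_eq, norm_div, norm_mul, norm_pow, norm_pow]
  simp only [norm_neg, norm_one, one_pow, one_mul, Complex.norm_real, Real.norm_eq_abs,
    abs_of_pos hq0, abs_of_pos (pr_pos hq0 hq1 k)]
  exact div_le_div_of_nonneg_left (pow_nonneg hq0.le _) (pow_pos (by linarith) k)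
    (pr_ge hq0 hq1 k)

/-- the dominating sequence -/
noncomputable def Br (q r : ℝ) (m : ℕ) : ℝ := q ^ (m * (m - 1) / 2) * (r / (1 - q)) ^ m

lemma Br_nonneg (hq0 : 0 < q) (hq1 : q < 1) {r : ℝ} (hr : 0 ≤ r) (m : ℕ) : 0 ≤ Br q r m :=
  mul_nonneg (pow_nonneg hq0.le _) (pow_nonneg (div_nonneg hr (by linarith)) _)

lemma Br_succ (r : ℝ) (m : ℕ) : Br q r (m + 1) = (q ^ m * (r / (1 - q))) * Br q r m := by
  rw [Br, Br, Nat.add_sub_cancel, tri_succ, pow_add, pow_succ]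
  ring

lemma summable_Br (hq0 : 0 < q) (hq1 : q < 1) {r : ℝ} (hr : 0 ≤ r) : Summable (Br q r) := by
  have h0 : Tendsto (fun m : ℕ => q ^ m * (r / (1 - q))) atTop (nhds 0) := by
    simpa using (tendsto_pow_atTop_nhds_zero_of_lt_one hq0.le hq1).mul_const (r / (1 - q))
  refine summable_of_ratio_norm_eventually_le (r := 2⁻¹) (by norm_num) ?_
  filter_upwards [h0.eventually (eventually_le_nhds (by norm_num : (0:ℝ) < 2⁻¹))] with m hm
  rw [Br_succ, norm_mul]
  have h1 : 0 ≤ q ^ m * (r / (1 - q)) :=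
    mul_nonneg (pow_nonneg hq0.le _) (div_nonneg hr (by linarith))
  calc ‖q ^ m * (r / (1 - q))‖ * ‖Br q r m‖ ≤ 2⁻¹ * ‖Br q r m‖ := by
        apply mul_le_mul_of_nonneg_right _ (norm_nonneg _)
        rw [Real.norm_eq_abs, _root_.abs_of_nonneg h1]; exact hm

lemma Br_mono (hq0 : 0 < q) (hq1 : q < 1) {r R : ℝ} (hr : 0 ≤ r) (hrR : r ≤ R) (m : ℕ) :
    Br q r m ≤ Br q R m := by
  unfold Br
  gcongr

lemma norm_ec_mul_pow_le (hq0 : 0 < q) (hq1 : q < 1) (a : ℂ) (m : ℕ) :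
    ‖ec q m * a ^ m‖ ≤ Br q ‖a‖ m := by
  rw [norm_mul, norm_pow, Br, div_pow]
  calc ‖ec q m‖ * ‖a‖ ^ m ≤ (q ^ (m * (m - 1) / 2) / (1 - q) ^ m) * ‖a‖ ^ m :=
        mul_le_mul_of_nonneg_right (norm_ec_le hq0 hq1 m) (pow_nonneg (norm_nonneg a) m)
    _ = q ^ (m * (m - 1) / 2) * (‖a‖ ^ m / (1 - q) ^ m) := by ring

end QAux

namespace QAux
variable {q : ℝ}

/-- the Euler series `∑ e_m a^m` -/
noncomputable def eul (q : ℝ) (a : ℂ) : ℂ := ∑' m : ℕ, ec q m * a ^ m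

lemma summable_eul (hq0 : 0 < q) (hq1 : q < 1) (a : ℂ) :
    Summable fun m : ℕ => ec q m * a ^ m :=
  Summable.of_norm_bounded (summable_Br hq0 hq1 (norm_nonneg a))
    (norm_ec_mul_pow_le hq0 hq1 a)

lemma ec_zero : ec q 0 = 1 := by simp [ec, qPoch]

lemma ec_rec (hq0 : 0 < q) (hq1 : q < 1) (m : ℕ) :
    ec q (m + 1) * (q : ℂ) ^ (m + 1) - ec q (m + 1) = (q : ℂ) ^ m * ec q m := by
  have hP : qPoch q (q : ℂ) (m + 1) = qPoch q (q : ℂ) m * (1 - (q : ℂ) * (q : ℂ) ^ m) := by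
    rw [qPoch, Finset.prod_range_succ, qPoch]
  have h1 : qPoch q (q : ℂ) m ≠ 0 := qPoch_q_ne hq0 hq1 m
  have h2 : qPoch q (q : ℂ) (m + 1) ≠ 0 := qPoch_q_ne hq0 hq1 (m + 1)
  have h3 : (1 - (q : ℂ) * (q : ℂ) ^ m) ≠ 0 := by
    intro h; apply h2; rw [hP, h, mul_zero]
  rw [ec, ec, Nat.add_sub_cancel, tri_succ, hP]
  field_simp
  ring_nf

lemma eul_rec (hq0 : 0 < q) (hq1 : q < 1) (a : ℂ) :
    eul q a = (1 - a) * eul q ((q : ℂ) * a) := by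
  have hA : HasSum (fun m : ℕ => ec q m * (q : ℂ) ^ m * a ^ m) (eul q ((q : ℂ) * a)) := by
    have := (summable_eul hq0 hq1 ((q : ℂ) * a)).hasSum
    rw [← eul] at this
    refine this.congr_fun fun m => by rw [mul_pow]; ring
  have ha : HasSum (fun m : ℕ => ec q m * a ^ m) (eul q a) := by
    have := (summable_eul hq0 hq1 a).hasSum
    rwa [← eul] at this
  have hB : HasSum (fun m : ℕ => ec q m * (q : ℂ) ^ m * a ^ (m + 1))
      (a * eul q ((q : ℂ) * a)) := by
    refine (hA.mul_left a).congr_fun fun m => ?_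
    rw [pow_succ]; ring
  -- shifted function
  set v : ℕ → ℂ := fun m => ec q m * (q : ℂ) ^ m * a ^ m - ec q m * a ^ m with hv
  have hshift : (fun m : ℕ => v (m + 1)) = fun m : ℕ => ec q m * (q : ℂ) ^ m * a ^ (m + 1) := by
    funext m
    have := ec_rec hq0 hq1 m
    simp only [hv]
    calc ec q (m+1) * (q:ℂ)^(m+1) * a^(m+1) - ec q (m+1) * a^(m+1)
        = (ec q (m+1) * (q:ℂ)^(m+1) - ec q (m+1)) * a^(m+1) := by ring
      _ = ((q:ℂ)^m * ec q m) * a^(m+1) := by rw [this]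
      _ = ec q m * (q:ℂ)^m * a^(m+1) := by ring
  have hv0 : v 0 = 0 := by simp [hv]
  have hBv : HasSum (fun m : ℕ => v (m + 1)) (a * eul q ((q : ℂ) * a)) := by
    rw [hshift]; exact hB
  have hvsum : HasSum v (a * eul q ((q : ℂ) * a)) := by
    have h' := (hasSum_nat_add_iff (f := v) 1).mp hBv
    simpa [hv0] using h'
  have hvsum2 : HasSum v (eul q ((q : ℂ) * a) - eul q a) := by
    refine (hA.sub ha).congr_fun fun m => rfl
  have heq : a * eul q ((q : ℂ) * a) = eul q ((q : ℂ) * a) - eul q a := hvsum.unique hvsum2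
  linear_combination heq

lemma eul_iter (hq0 : 0 < q) (hq1 : q < 1) (a : ℂ) (n : ℕ) :
    eul q a = qPoch q a n * eul q ((q : ℂ) ^ n * a) := by
  induction n with
  | zero => simp [qPoch]
  | succ n ih =>
    have hp : qPoch q a (n + 1) = qPoch q a n * (1 - a * (q : ℂ) ^ n) := by
      rw [qPoch, Finset.prod_range_succ, ← qPoch]
    have h1 : (q : ℂ) * ((q : ℂ) ^ n * a) = (q : ℂ) ^ (n + 1) * a := by ring
    rw [ih, eul_rec hq0 hq1 ((q : ℂ) ^ n * a), hp, h1]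
    ring

lemma multipliable_aux (hq0 : 0 < q) (hq1 : q < 1) (a : ℂ) :
    Multipliable fun j : ℕ => 1 - a * (q : ℂ) ^ j := by
  by_cases h : ∃ j, 1 - a * (q : ℂ) ^ j = 0
  · obtain ⟨j0, hj0⟩ := h
    refine ⟨0, ?_⟩
    have hev : ∀ᶠ s : Finset ℕ in atTop, ∏ i ∈ s, (1 - a * (q : ℂ) ^ i) = 0 := by
      filter_upwards [eventually_ge_atTop ({j0} : Finset ℕ)] with s hs
      exact Finset.prod_eq_zero (hs (Finset.mem_singleton_self j0)) hj0
    exact Tendsto.congr' (by filter_upwards [hev] with s hs; exact hs.symm) tendsto_const_nhds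
  · push_neg at h
    refine Complex.multipliable_of_summable_log ?_
    have hb : Summable fun j : ℕ => (3 / 2 : ℝ) * ‖a‖ * q ^ j :=
      (summable_geometric_of_lt_one hq0.le hq1).mul_left _
    refine Summable.of_norm_bounded_eventually_nat hb ?_
    have h0 : Tendsto (fun j : ℕ => ‖a‖ * q ^ j) atTop (nhds 0) := by
      simpa using (tendsto_pow_atTop_nhds_zero_of_lt_one hq0.le hq1).const_mul ‖a‖
    filter_upwards [h0.eventually (eventually_le_nhds (by norm_num : (0:ℝ) < 1/2))] with j hj
    have h2 : ‖-(a * (q : ℂ) ^ j)‖ ≤ 1 / 2 := by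
      rw [norm_neg, norm_mul, norm_pow, Complex.norm_real, Real.norm_eq_abs, abs_of_pos hq0]
      exact hj
    have := Complex.norm_log_one_add_half_le_self h2
    rw [show (1 : ℂ) + -(a * (q : ℂ) ^ j) = 1 - a * (q : ℂ) ^ j by ring] at this
    refine this.trans ?_
    rw [norm_neg, norm_mul, norm_pow, Complex.norm_real, Real.norm_eq_abs, abs_of_pos hq0]
    ring_nf
    exact le_rfl

end QAux

namespace QAux
variable {q : ℝ}

lemma qPoch_tendsto (hq0 : 0 < q) (hq1 : q < 1) (a : ℂ) :
    Tendsto (fun n => qPoch q a n) atTop (nhds (qPochInf q a)) := by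
  have h := (multipliable_aux hq0 hq1 a).hasProd.tendsto_prod_nat
  exact h

lemma eul_sub_one_norm (hq0 : 0 < q) (hq1 : q < 1) (x : ℂ) :
    ‖eul q x - 1‖ ≤ ∑' m : ℕ, ‖ec q (m + 1) * x ^ (m + 1)‖ := by
  have hs := summable_eul hq0 hq1 x
  have h0 : eul q x = 1 + ∑' m : ℕ, ec q (m + 1) * x ^ (m + 1) := by
    rw [eul, hs.tsum_eq_zero_add, ec_zero]
    simp
  rw [h0]
  simp only [add_sub_cancel_left]
  exact norm_tsum_le_tsum_norm ((hs.norm).comp_injective (add_left_injective 1))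

lemma eul_tendsto_one (hq0 : 0 < q) (hq1 : q < 1) (a : ℂ) :
    Tendsto (fun n : ℕ => eul q ((q : ℂ) ^ n * a)) atTop (nhds 1) := by
  have hsB : Summable fun m : ℕ => Br q ‖a‖ (m + 1) :=
    (summable_Br hq0 hq1 (norm_nonneg a)).comp_injective (add_left_injective 1)
  set C : ℝ := ∑' m : ℕ, Br q ‖a‖ (m + 1) with hC
  have hkey : ∀ n : ℕ, ‖eul q ((q : ℂ) ^ n * a) - 1‖ ≤ q ^ n * C := by
    intro n
    refine (eul_sub_one_norm hq0 hq1 _).trans ?_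
    rw [← tsum_mul_left]
    refine Summable.tsum_le_tsum (fun m => ?_) ((summable_eul hq0 hq1 _).norm.comp_injective
      (add_left_injective 1)) (hsB.mul_left _)
    have h1 : ‖ec q (m + 1) * ((q : ℂ) ^ n * a) ^ (m + 1)‖
        = (q ^ n) ^ (m + 1) * ‖ec q (m + 1) * a ^ (m + 1)‖ := by
      simp only [mul_pow, norm_mul, norm_pow, Complex.norm_real, Real.norm_eq_abs,
        abs_of_pos hq0]
      ring
    rw [h1]
    have h2 : (q ^ n) ^ (m + 1) ≤ q ^ n := by
      calc (q ^ n) ^ (m + 1) ≤ (q ^ n) ^ 1 :=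
            pow_le_pow_of_le_one (pow_nonneg hq0.le n) (pow_le_one₀ hq0.le hq1.le) (by omega)
        _ = q ^ n := pow_one _
    calc (q ^ n) ^ (m + 1) * ‖ec q (m + 1) * a ^ (m + 1)‖
        ≤ q ^ n * ‖ec q (m + 1) * a ^ (m + 1)‖ :=
          mul_le_mul_of_nonneg_right h2 (norm_nonneg _)
      _ ≤ q ^ n * Br q ‖a‖ (m + 1) := by
          refine mul_le_mul_of_nonneg_left ?_ (pow_nonneg hq0.le n)
          have := norm_ec_mul_pow_le hq0 hq1 a (m + 1)
          simpa using this
  have hlim : Tendsto (fun n : ℕ => q ^ n * C) atTop (nhds 0) := by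
    simpa using (tendsto_pow_atTop_nhds_zero_of_lt_one hq0.le hq1).mul_const C
  have h3 : Tendsto (fun n : ℕ => eul q ((q : ℂ) ^ n * a) - 1) atTop (nhds 0) :=
    squeeze_zero_norm hkey hlim
  have := h3.add_const 1
  simpa using this

lemma eul_eq_qPochInf (hq0 : 0 < q) (hq1 : q < 1) (a : ℂ) : eul q a = qPochInf q a := by
  have h1 : Tendsto (fun n : ℕ => qPoch q a n * eul q ((q : ℂ) ^ n * a)) atTop
      (nhds (qPochInf q a * 1)) :=
    (qPoch_tendsto hq0 hq1 a).mul (eul_tendsto_one hq0 hq1 a)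
  have h2 : Tendsto (fun _ : ℕ => eul q a) atTop (nhds (eul q a)) := tendsto_const_nhds
  have h3 : (fun n : ℕ => qPoch q a n * eul q ((q : ℂ) ^ n * a)) = fun _ => eul q a := by
    funext n; exact (eul_iter hq0 hq1 a n).symm
  rw [h3] at h1
  simpa using (tendsto_nhds_unique h2 h1)

lemma hasSum_euler (hq0 : 0 < q) (hq1 : q < 1) (a : ℂ) :
    HasSum (fun m : ℕ => ec q m * a ^ m) (qPochInf q a) := by
  have := (summable_eul hq0 hq1 a).hasSum
  rwa [← eul, eul_eq_qPochInf hq0 hq1] at this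

lemma qPochInf_split (hq0 : 0 < q) (hq1 : q < 1) (a : ℂ) (k : ℕ) :
    qPochInf q a = qPoch q a k * qPochInf q ((q : ℂ) ^ k * a) := by
  have hm2 : Multipliable (fun n : ℕ => 1 - a * (q : ℂ) ^ (n + k)) :=
    (multipliable_aux hq0 hq1 ((q : ℂ) ^ k * a)).congr fun n => by rw [pow_add]; ring
  have h := Multipliable.prod_mul_tprod_nat_mul' (f := fun j : ℕ => 1 - a * (q : ℂ) ^ j) (k := k) hm2
  have h2 : (∏' j : ℕ, (1 - ((q : ℂ) ^ k * a) * (q : ℂ) ^ j))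
      = ∏' j : ℕ, (1 - a * (q : ℂ) ^ (j + k)) := by
    refine tprod_congr fun j => ?_
    rw [pow_add]
    ring
  rw [qPochInf, qPochInf, qPoch, h2]
  exact h.symm

end QAux

namespace QAux
variable {q : ℝ}

/-- term of the double series -/
noncomputable def tc (q : ℝ) (z w : ℂ) (p : ℕ × ℕ) : ℂ :=
  ec q p.1 * ec q p.2 * (q : ℂ) ^ (p.1 * p.2) * z ^ p.1 * w ^ p.2

lemma tc_symm (z w : ℂ) (p : ℕ × ℕ) : tc q z w p.swap = tc q w z p := by
  rcases p with ⟨k, m⟩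
  simp only [tc, Prod.swap]
  rw [mul_comm m k]
  ring

lemma norm_tc_le (hq0 : 0 < q) (hq1 : q < 1) (z w : ℂ) (p : ℕ × ℕ) :
    ‖tc q z w p‖ ≤ Br q ‖z‖ p.1 * Br q ‖w‖ p.2 := by
  rcases p with ⟨k, m⟩
  have h1 : ‖tc q z w (k, m)‖
      = ‖ec q k * z ^ k‖ * ‖ec q m * w ^ m‖ * ‖(q : ℂ) ^ (k * m)‖ := by
    simp only [tc, norm_mul]
    ring
  rw [h1]
  have h2 : ‖(q : ℂ) ^ (k * m)‖ ≤ 1 := by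
    rw [norm_pow, Complex.norm_real, Real.norm_eq_abs, abs_of_pos hq0]
    exact pow_le_one₀ hq0.le hq1.le
  calc ‖ec q k * z ^ k‖ * ‖ec q m * w ^ m‖ * ‖(q : ℂ) ^ (k * m)‖
      ≤ ‖ec q k * z ^ k‖ * ‖ec q m * w ^ m‖ * 1 := by
        exact mul_le_mul_of_nonneg_left h2 (by positivity)
    _ = ‖ec q k * z ^ k‖ * ‖ec q m * w ^ m‖ := by ring
    _ ≤ Br q ‖z‖ k * Br q ‖w‖ m :=
        mul_le_mul (norm_ec_mul_pow_le hq0 hq1 z k) (norm_ec_mul_pow_le hq0 hq1 w m)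
          (norm_nonneg _) (Br_nonneg hq0 hq1 (norm_nonneg z) k)

lemma summable_norm_tc (hq0 : 0 < q) (hq1 : q < 1) (z w : ℂ) :
    Summable fun p : ℕ × ℕ => ‖tc q z w p‖ := by
  refine Summable.of_nonneg_of_le (fun p => norm_nonneg _) (norm_tc_le hq0 hq1 z w) ?_
  exact (summable_Br hq0 hq1 (norm_nonneg z)).mul_of_nonneg
    (summable_Br hq0 hq1 (norm_nonneg w))
    (Br_nonneg hq0 hq1 (norm_nonneg z)) (Br_nonneg hq0 hq1 (norm_nonneg w))

lemma summable_tc (hq0 : 0 < q) (hq1 : q < 1) (z w : ℂ) : Summable (tc q z w) :=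
  Summable.of_norm (summable_norm_tc hq0 hq1 z w)

lemma Fterm_eq (hq0 : 0 < q) (hq1 : q < 1) (z w : ℂ) (k : ℕ) :
    Fterm q z w k = ec q k * qPochInf q ((q : ℂ) ^ k * w) * z ^ k := by
  rw [Fterm, ec]
  ring

lemma hasSum_Fterm (hq0 : 0 < q) (hq1 : q < 1) (z w : ℂ) (k : ℕ) :
    HasSum (fun m : ℕ => tc q z w (k, m)) (Fterm q z w k) := by
  have h := (hasSum_euler hq0 hq1 ((q : ℂ) ^ k * w)).mul_left (ec q k * z ^ k)
  have h2 : ec q k * z ^ k * qPochInf q ((q : ℂ) ^ k * w) = Fterm q z w k := by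
    rw [Fterm_eq hq0 hq1]; ring
  rw [h2] at h
  refine h.congr_fun fun m => ?_
  rw [tc]
  simp only
  rw [mul_pow, ← pow_mul]
  ring

end QAux

namespace QAux
variable {q : ℝ}

lemma hasSum_tc_total (hq0 : 0 < q) (hq1 : q < 1) (z w : ℂ) :
    HasSum (tc q z w) (Fqb q z w) := by
  have hs := summable_tc hq0 hq1 z w
  have h1 : ∑' p : ℕ × ℕ, tc q z w p = Fqb q z w := by
    rw [Summable.tsum_prod' hs (fun k => hs.prod_factor k), Fqb]
    exact tsum_congr fun k => (hasSum_Fterm hq0 hq1 z w k).tsum_eq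
  rw [← h1]
  exact hs.hasSum

set_option maxHeartbeats 1000000 in
lemma Fqb_symm (hq0 : 0 < q) (hq1 : q < 1) (z w : ℂ) : Fqb q z w = Fqb q w z := by
  have h1 := (hasSum_tc_total hq0 hq1 z w)
  have h2 := (hasSum_tc_total hq0 hq1 w z)
  have h4 : ∑' p : ℕ × ℕ, tc q z w p.swap = ∑' p : ℕ × ℕ, tc q z w p :=
    (Equiv.prodComm ℕ ℕ).tsum_eq (tc q z w)
  have h5 : ∑' p : ℕ × ℕ, tc q z w p.swap = ∑' p : ℕ × ℕ, tc q w z p :=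
    tsum_congr fun p => tc_symm z w p
  rw [← h1.tsum_eq, ← h2.tsum_eq, ← h4, h5]

/-- master bound for `Fterm` -/
lemma norm_Fterm_le (hq0 : 0 < q) (hq1 : q < 1) {z w : ℂ} {R : ℝ}
    (hz : ‖z‖ ≤ R) (hw : ‖w‖ ≤ R) (k : ℕ) :
    ‖Fterm q z w k‖ ≤ Br q R k * ∑' m : ℕ, Br q R m := by
  have hR : 0 ≤ R := le_trans (norm_nonneg z) hz
  have h1 : ‖Fterm q z w k‖ ≤ ∑' m : ℕ, ‖tc q z w (k, m)‖ := by
    rw [← (hasSum_Fterm hq0 hq1 z w k).tsum_eq]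
    exact norm_tsum_le_tsum_norm ((summable_norm_tc hq0 hq1 z w).prod_factor k)
  refine h1.trans ?_
  rw [← tsum_mul_left]
  refine Summable.tsum_le_tsum (fun m => ?_) ((summable_norm_tc hq0 hq1 z w).prod_factor k)
    ((summable_Br hq0 hq1 hR).mul_left _)
  refine (norm_tc_le hq0 hq1 z w (k, m)).trans ?_
  exact mul_le_mul (Br_mono hq0 hq1 (norm_nonneg z) hz k)
    (Br_mono hq0 hq1 (norm_nonneg w) hw m) (Br_nonneg hq0 hq1 (norm_nonneg w) m)
    (Br_nonneg hq0 hq1 hR k)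

lemma summable_master (hq0 : 0 < q) (hq1 : q < 1) {R : ℝ} (hR : 0 ≤ R) :
    Summable fun k : ℕ => Br q R k * ∑' m : ℕ, Br q R m :=
  (summable_Br hq0 hq1 hR).mul_right _

lemma summable_norm_Fterm (hq0 : 0 < q) (hq1 : q < 1) (z w : ℂ) :
    Summable fun k : ℕ => ‖Fterm q z w k‖ := by
  set R : ℝ := max ‖z‖ ‖w‖ with hR
  have hR0 : 0 ≤ R := le_trans (norm_nonneg z) (le_max_left _ _)
  refine Summable.of_nonneg_of_le (fun k => norm_nonneg _)
    (fun k => norm_Fterm_le hq0 hq1 (le_max_left _ _) (le_max_right _ _) k)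
    (summable_master hq0 hq1 hR0)

lemma part2 (hq0 : 0 < q) (hq1 : q < 1) (K : Set (ℂ × ℂ)) (hK : IsCompact K) :
    TendstoUniformlyOn (fun N (p : ℂ × ℂ) => ∑ k ∈ Finset.range N, Fterm q p.1 p.2 k)
      (fun p => Fqb q p.1 p.2) atTop K := by
  obtain ⟨R, hR⟩ := hK.isBounded.exists_norm_le
  set R' : ℝ := max R 0 with hR'
  have hb : ∀ (k : ℕ) (p : ℂ × ℂ), p ∈ K →
      ‖Fterm q p.1 p.2 k‖ ≤ Br q R' k * ∑' m : ℕ, Br q R' m := by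
    intro k p hp
    refine norm_Fterm_le hq0 hq1 ?_ ?_ k
    · exact le_trans (norm_fst_le p) (le_trans (hR p hp) (le_max_left _ _))
    · exact le_trans (norm_snd_le p) (le_trans (hR p hp) (le_max_left _ _))
  exact tendstoUniformlyOn_tsum_nat (summable_master hq0 hq1 (le_max_right R 0)) hb

end QAux

namespace QAux
variable {q : ℝ}

lemma qPoch_ne_of (hq0 : 0 < q) {a : ℂ} (ha : ∀ j : ℕ, a ≠ (q : ℂ) ^ (-(j : ℤ))) (k : ℕ) :
    qPoch q a k ≠ 0 := by
  rw [qPoch]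
  refine Finset.prod_ne_zero_iff.mpr fun j _ => ?_
  intro h
  have h1 : a * (q : ℂ) ^ j = 1 := by linear_combination -h
  have h2 : a = ((q : ℂ) ^ j)⁻¹ := eq_inv_of_mul_eq_one_left h1
  refine ha j ?_
  rw [h2, zpow_neg, zpow_natCast]

lemma part5aux (hq0 : 0 < q) (hq1 : q < 1) (z w : ℂ)
    (hw : ∀ j : ℕ, w ≠ (q : ℂ) ^ (-(j : ℤ))) :
    qPochInf q w * phi11 q w z = Fqb q z w := by
  rw [phi11, ← tsum_mul_left]
  rw [Fqb]
  refine tsum_congr fun k => ?_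
  have hpw : qPoch q w k ≠ 0 := qPoch_ne_of hq0 hw k
  have hpq : qPoch q (q : ℂ) k ≠ 0 := qPoch_q_ne hq0 hq1 k
  rw [qPochInf_split hq0 hq1 w k, Fterm]
  field_simp

end QAux

namespace QAux
variable {q : ℝ}

noncomputable def cc (q : ℝ) (k m : ℕ) : ℂ := ec q k * ec q m * (q : ℂ) ^ (k * m)

lemma tc_eq_cc (z w : ℂ) (k m : ℕ) : tc q z w (k, m) = cc q k m * z ^ k * w ^ m := rfl

lemma norm_tc_real {r : ℝ} (hr : 0 ≤ r) (k m : ℕ) :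
    ‖tc q ((r : ℝ) : ℂ) ((r : ℝ) : ℂ) (k, m)‖ = ‖cc q k m‖ * r ^ k * r ^ m := by
  rw [tc_eq_cc, norm_mul, norm_mul, norm_pow, norm_pow, Complex.norm_real,
    Real.norm_eq_abs, _root_.abs_of_nonneg hr]

noncomputable def projS (n : ℕ) (S : Finset (Fin n)) :
    ContinuousMultilinearMap ℂ (fun _ : Fin n => ℂ × ℂ) ℂ :=
  (ContinuousMultilinearMap.mkPiAlgebra ℂ (Fin n) ℂ).compContinuousLinearMap
    (fun i => if i ∈ S then ContinuousLinearMap.fst ℂ ℂ ℂ else ContinuousLinearMap.snd ℂ ℂ ℂ)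

lemma projS_apply_const (n : ℕ) (S : Finset (Fin n)) (p : ℂ × ℂ) :
    projS n S (fun _ => p) = p.1 ^ S.card * p.2 ^ (n - S.card) := by
  rw [projS, ContinuousMultilinearMap.compContinuousLinearMap_apply,
    ContinuousMultilinearMap.mkPiAlgebra_apply]
  have h1 : ∀ i : Fin n,
      (if i ∈ S then ContinuousLinearMap.fst ℂ ℂ ℂ else ContinuousLinearMap.snd ℂ ℂ ℂ) p
        = if i ∈ S then p.1 else p.2 := by
    intro i
    by_cases h : i ∈ S <;> simp [h]
  rw [Finset.prod_congr rfl fun i _ => h1 i, Finset.prod_ite, Finset.prod_const,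
    Finset.prod_const]
  have h2 : Finset.filter (fun i => i ∈ S) Finset.univ = S := by ext i; simp
  have h3 : Finset.filter (fun i => i ∉ S) Finset.univ = Sᶜ := by ext i; simp
  rw [h2, h3, Finset.card_compl, Fintype.card_fin]

lemma norm_projS_le (n : ℕ) (S : Finset (Fin n)) : ‖projS n S‖ ≤ 1 := by
  refine (ContinuousMultilinearMap.norm_compContinuousLinearMap_le _ _).trans ?_
  have h1 : ∀ i : Fin n,
      ‖if i ∈ S then ContinuousLinearMap.fst ℂ ℂ ℂ else ContinuousLinearMap.snd ℂ ℂ ℂ‖ ≤ 1 := by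
    intro i
    by_cases h : i ∈ S <;> simp only [h, if_true, if_false]
    · refine ContinuousLinearMap.opNorm_le_bound _ zero_le_one fun x => ?_
      simpa [one_mul] using norm_fst_le x
    · refine ContinuousLinearMap.opNorm_le_bound _ zero_le_one fun x => ?_
      simpa [one_mul] using norm_snd_le x
  calc ‖ContinuousMultilinearMap.mkPiAlgebra ℂ (Fin n) ℂ‖ * ∏ i : Fin n, ‖_‖
      ≤ 1 * 1 := by
        refine mul_le_mul ?_ ?_ (by positivity) zero_le_one
        · rw [ContinuousMultilinearMap.norm_mkPiAlgebra]
        · exact Finset.prod_le_one (fun i _ => norm_nonneg _) (fun i _ => h1 i)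
    _ = 1 := one_mul 1

end QAux

namespace QAux
variable {q : ℝ}

noncomputable def Pser (q : ℝ) : FormalMultilinearSeries ℂ (ℂ × ℂ) ℂ :=
  fun n => ∑ S : Finset (Fin n),
    (cc q S.card (n - S.card) / (n.choose S.card : ℂ)) • projS n S

lemma choose_ne_zero' {n k : ℕ} (hk : k ≤ n) : ((n.choose k : ℂ)) ≠ 0 := by
  exact_mod_cast (Nat.choose_pos hk).ne'

lemma Pser_apply (n : ℕ) (p : ℂ × ℂ) :
    Pser q n (fun _ => p) = ∑ k ∈ Finset.range (n + 1), cc q k (n - k) * p.1 ^ k * p.2 ^ (n - k) := by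
  rw [Pser, ContinuousMultilinearMap.sum_apply]
  simp only [ContinuousMultilinearMap.smul_apply, projS_apply_const, smul_eq_mul]
  have h0 : ∑ S : Finset (Fin n),
      cc q S.card (n - S.card) / (n.choose S.card : ℂ) * (p.1 ^ S.card * p.2 ^ (n - S.card))
      = ∑ S ∈ (Finset.univ : Finset (Fin n)).powerset,
        (fun k => cc q k (n - k) / (n.choose k : ℂ) * (p.1 ^ k * p.2 ^ (n - k))) S.card := by
    rw [Finset.powerset_univ]
  have h4 := Finset.sum_powerset_apply_card
    (fun k => cc q k (n - k) / (n.choose k : ℂ) * (p.1 ^ k * p.2 ^ (n - k)))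
    (x := (Finset.univ : Finset (Fin n)))
  simp only [Finset.card_univ, Fintype.card_fin] at h4
  rw [h0, h4]
  refine Finset.sum_congr rfl fun k hk => ?_
  have hk' : k ≤ n := Nat.lt_succ_iff.mp (Finset.mem_range.mp hk)
  rw [nsmul_eq_mul]
  field_simp [choose_ne_zero' hk']

lemma norm_Pser_le (n : ℕ) :
    ‖Pser q n‖ ≤ ∑ k ∈ Finset.range (n + 1), ‖cc q k (n - k)‖ := by
  refine (norm_sum_le _ _).trans ?_
  have h1 : ∀ S : Finset (Fin n),
      ‖(cc q S.card (n - S.card) / (n.choose S.card : ℂ)) • projS n S‖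
        ≤ ‖cc q S.card (n - S.card)‖ / (n.choose S.card : ℝ) := by
    intro S
    calc ‖(cc q S.card (n - S.card) / (n.choose S.card : ℂ)) • projS n S‖
        ≤ ‖cc q S.card (n - S.card) / (n.choose S.card : ℂ)‖ * ‖projS n S‖ :=
          ContinuousMultilinearMap.opNorm_smul_le _ _
      _ ≤ ‖cc q S.card (n - S.card) / (n.choose S.card : ℂ)‖ * 1 :=
          mul_le_mul_of_nonneg_left (norm_projS_le n S) (norm_nonneg _)
      _ = ‖cc q S.card (n - S.card)‖ / (n.choose S.card : ℝ) := by
          rw [mul_one, norm_div, Complex.norm_natCast]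
  refine (Finset.sum_le_sum fun S _ => h1 S).trans ?_
  have h0 : ∑ S : Finset (Fin n), ‖cc q S.card (n - S.card)‖ / (n.choose S.card : ℝ)
      = ∑ S ∈ (Finset.univ : Finset (Fin n)).powerset,
        (fun k => ‖cc q k (n - k)‖ / (n.choose k : ℝ)) S.card := by
    rw [Finset.powerset_univ]
  have h4 := Finset.sum_powerset_apply_card
    (fun k => ‖cc q k (n - k)‖ / (n.choose k : ℝ)) (x := (Finset.univ : Finset (Fin n)))
  simp only [Finset.card_univ, Fintype.card_fin] at h4
  rw [h0, h4]
  refine Finset.sum_le_sum fun k hk => ?_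
  have hk' : k ≤ n := Nat.lt_succ_iff.mp (Finset.mem_range.mp hk)
  have hch : (0 : ℝ) < (n.choose k : ℝ) := by exact_mod_cast Nat.choose_pos hk'
  rw [nsmul_eq_mul]
  rw [mul_div_cancel₀]
  exact hch.ne'

lemma hasSum_rows (hq0 : 0 < q) (hq1 : q < 1) (z w : ℂ) :
    HasSum (fun n => ∑ p ∈ Finset.HasAntidiagonal.antidiagonal n, tc q z w p) (Fqb q z w) := by
  have h := hasSum_tc_total hq0 hq1 z w
  have h2 := (Finset.HasAntidiagonal.sigmaAntidiagonalEquivProd (A := ℕ)).hasSum_iff.mpr h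
  refine HasSum.sigma h2 fun n => ?_
  have h3 := hasSum_fintype (fun c : {x // x ∈ Finset.HasAntidiagonal.antidiagonal n} => tc q z w (c : ℕ × ℕ))
  rwa [Finset.sum_coe_sort (Finset.HasAntidiagonal.antidiagonal n) (tc q z w)] at h3

lemma summable_rows_norm (hq0 : 0 < q) (hq1 : q < 1) (z w : ℂ) :
    Summable (fun n => ∑ p ∈ Finset.HasAntidiagonal.antidiagonal n, ‖tc q z w p‖) := by
  have h := (summable_norm_tc hq0 hq1 z w).hasSum
  have h2 := (Finset.HasAntidiagonal.sigmaAntidiagonalEquivProd (A := ℕ)).hasSum_iff.mpr h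
  refine HasSum.summable (HasSum.sigma h2 fun n => ?_)
  have h3 := hasSum_fintype
    (fun c : {x // x ∈ Finset.HasAntidiagonal.antidiagonal n} => ‖tc q z w (c : ℕ × ℕ)‖)
  rwa [Finset.sum_coe_sort (Finset.HasAntidiagonal.antidiagonal n) (fun p => ‖tc q z w p‖)] at h3

lemma summable_Pser_norm (hq0 : 0 < q) (hq1 : q < 1) (r : NNReal) :
    Summable fun n => ‖Pser q n‖ * (r : ℝ) ^ n := by
  refine Summable.of_nonneg_of_le (fun n => by positivity) (fun n => ?_)
    (summable_rows_norm hq0 hq1 ((r : ℝ) : ℂ) ((r : ℝ) : ℂ))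
  calc ‖Pser q n‖ * (r : ℝ) ^ n
      ≤ (∑ k ∈ Finset.range (n + 1), ‖cc q k (n - k)‖) * (r : ℝ) ^ n :=
        mul_le_mul_of_nonneg_right (norm_Pser_le n) (by positivity)
    _ = ∑ k ∈ Finset.range (n + 1), ‖cc q k (n - k)‖ * (r : ℝ) ^ n := by rw [Finset.sum_mul]
    _ = ∑ p ∈ Finset.HasAntidiagonal.antidiagonal n, ‖tc q ((r : ℝ) : ℂ) ((r : ℝ) : ℂ) p‖ := by
        rw [Finset.Nat.sum_antidiagonal_eq_sum_range_succ_mk]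
        refine Finset.sum_congr rfl fun k hk => ?_
        have hk' : k ≤ n := Nat.lt_succ_iff.mp (Finset.mem_range.mp hk)
        rw [norm_tc_real r.coe_nonneg, mul_assoc, ← pow_add,
          show k + (n - k) = n from by omega]

lemma hasFPower (hq0 : 0 < q) (hq1 : q < 1) :
    HasFPowerSeriesOnBall (fun p : ℂ × ℂ => Fqb q p.1 p.2) (Pser q) 0 ⊤ := by
  constructor
  · rw [FormalMultilinearSeries.radius_eq_top_of_summable_norm _
      (fun r => summable_Pser_norm hq0 hq1 r)]
  · exact ENNReal.zero_lt_top
  · intro y _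
    have h := hasSum_rows hq0 hq1 y.1 y.2
    have h2 : ∀ n, ∑ p ∈ Finset.HasAntidiagonal.antidiagonal n, tc q y.1 y.2 p = Pser q n (fun _ => y) := by
      intro n
      rw [Pser_apply, Finset.Nat.sum_antidiagonal_eq_sum_range_succ_mk]
      exact Finset.sum_congr rfl fun k hk => rfl
    have h3 : HasSum (fun n => Pser q n (fun _ => y)) (Fqb q y.1 y.2) :=
      HasSum.congr_fun h fun n => (h2 n).symm
    simpa using h3

lemma part3 (hq0 : 0 < q) (hq1 : q < 1) :
    AnalyticOnNhd ℂ (fun p : ℂ × ℂ => Fqb q p.1 p.2) Set.univ := by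
  intro p _
  exact (hasFPower hq0 hq1).analyticAt_of_mem (by simp [EMetric.mem_ball, edist_lt_top])

end QAux

/-- Proposition 2.1: the series defining `F` converges absolutely everywhere, uniformly on
compact subsets of `ℂ²`; `F` is analytic on `ℂ²` and symmetric, whence the symmetry
`(w;q)_∞ ₁φ₁(0;w;q,z) = (z;q)_∞ ₁φ₁(0;z;q,w)` away from the singular points `q^{-j}`. -/
theorem stmt0 (q : ℝ) (hq0 : 0 < q) (hq1 : q < 1) :
    (∀ z w : ℂ, Summable fun k : ℕ => ‖Fterm q z w k‖) ∧
    (∀ K : Set (ℂ × ℂ), IsCompact K →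
      TendstoUniformlyOn (fun N (p : ℂ × ℂ) => ∑ k ∈ Finset.range N, Fterm q p.1 p.2 k)
        (fun p => Fqb q p.1 p.2) atTop K) ∧
    AnalyticOnNhd ℂ (fun p : ℂ × ℂ => Fqb q p.1 p.2) Set.univ ∧
    (∀ z w : ℂ, Fqb q z w = Fqb q w z) ∧
    (∀ z w : ℂ, (∀ j : ℕ, w ≠ (q : ℂ) ^ (-(j : ℤ))) → (∀ j : ℕ, z ≠ (q : ℂ) ^ (-(j : ℤ))) →
      qPochInf q w * phi11 q w z = qPochInf q z * phi11 q z w) := by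
  refine ⟨fun z w => QAux.summable_norm_Fterm hq0 hq1 z w,
    fun K hK => QAux.part2 hq0 hq1 K hK,
    QAux.part3 hq0 hq1,
    fun z w => QAux.Fqb_symm hq0 hq1 z w, ?_⟩
  intro z w hw hz
  rw [QAux.part5aux hq0 hq1 z w hw, QAux.part5aux hq0 hq1 w z hz,
    QAux.Fqb_symm hq0 hq1 z w]
end

section
/- Let 0 < q < 1. For every integer n and every nonzero z ∈ ℂ, F(z, q^{1-n}) = (-1)^n q^{n(n-1)/2} z^n F(q^n z, q^{n+1}). (For n ≥ 1 this makes precise the identity (q^{1-n};q)_∞ ₁φ₁(0;q^{1-n};q,z) = (-1)^n q^{n(n-1)/2} z^n (q^{n+1};q)_∞ ₁φ₁(0;q^{n+1};q,q^n z), where the left-hand side is interpreted via the entire series F.) -/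
open Complex Filter

lemma hasProd_zero_of_eq_zero {f : ℕ → ℂ} (j : ℕ) (h : f j = 0) : HasProd f 0 := by
  have hev : ∀ᶠ s : Finset ℕ in Filter.atTop, ∏ b ∈ s, f b = (0:ℂ) := by
    filter_upwards [Filter.eventually_ge_atTop ({j} : Finset ℕ)] with s hs
    exact Finset.prod_eq_zero (hs (Finset.mem_singleton_self j)) h
  exact (tendsto_const_nhds (x := (0:ℂ)) (f := Filter.atTop (α := Finset ℕ))).congr'
    (by filter_upwards [hev] with s hs using hs.symm)

lemma mult_aux {q : ℝ} (hq0 : 0 < q) (hq1 : q < 1) (r : ℝ) (hr0 : 0 < r) (hr1 : r < 1) :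
    Multipliable (fun j : ℕ => (1:ℂ) - (r:ℂ) * (q:ℂ)^j) := by
  have hfac : ∀ j : ℕ, 0 < 1 - r * q ^ j := by
    intro j
    have h1 : q ^ j ≤ 1 := pow_le_one₀ hq0.le hq1.le
    nlinarith
  have hsum : Summable (fun n : ℕ => Real.log (1 - r * q ^ n)) := by
    have hg : Summable (fun n : ℕ => (r * q ^ n) / (1 - r)) :=
      ((summable_geometric_of_lt_one hq0.le hq1).mul_left r).div_const (1 - r)
    apply Summable.of_norm_bounded hg
    intro n
    set x := r * q ^ n with hx
    have hx0 : 0 < x := mul_pos hr0 (pow_pos hq0 n)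
    have hxq : x ≤ r := by
      have := pow_le_one₀ hq0.le hq1.le (n := n); nlinarith
    have h1x : 0 < 1 - x := hfac n
    have hlog : Real.log (1 - x) ≤ 0 := Real.log_nonpos (by linarith) (by linarith)
    rw [Real.norm_eq_abs, abs_of_nonpos hlog]
    have h2 : -Real.log (1 - x) = Real.log ((1 - x)⁻¹) := by rw [Real.log_inv]
    have h3 : Real.log ((1 - x)⁻¹) ≤ (1 - x)⁻¹ - 1 :=
      Real.log_le_sub_one_of_pos (by positivity)
    have h4 : (1 - x)⁻¹ - 1 = x / (1 - x) := by field_simp; ring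
    have h5 : x / (1 - x) ≤ x / (1 - r) := by gcongr
    linarith [h2, h3, h4 ▸ h3]
  have hR : Multipliable (fun n : ℕ => (1 - r * q ^ n : ℝ)) :=
    Real.multipliable_of_summable_log hfac hsum
  have hC := hR.map Complex.ofRealHom.toMonoidHom Complex.continuous_ofReal
  apply hC.congr
  intro j
  simp [Function.comp]

lemma qPoch_ne_zero {q : ℝ} (hq0 : 0 < q) (hq1 : q < 1) (k : ℕ) :
    qPoch q (q : ℂ) k ≠ 0 := by
  unfold qPoch
  rw [Finset.prod_ne_zero_iff]
  intro j _
  rw [sub_ne_zero]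
  intro h
  have h' : (1 : ℝ) = q * q ^ j := by
    have : ((1 : ℝ) : ℂ) = ((q * q ^ j : ℝ) : ℂ) := by push_cast; exact h
    exact_mod_cast this
  have h1 : q ^ j ≤ 1 := pow_le_one₀ hq0.le hq1.le
  nlinarith

lemma qPoch_mul_qPochInf {q : ℝ} (hq0 : 0 < q) (hq1 : q < 1) (k : ℕ) :
    qPoch q (q : ℂ) k * qPochInf q ((q : ℂ) ^ (k + 1)) = qPochInf q (q : ℂ) := by
  have hm : Multipliable (fun n : ℕ => (1:ℂ) - (q:ℂ) * (q:ℂ) ^ (n + k)) := by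
    have hpow : (0:ℝ) < q ^ (k+1) := pow_pos hq0 _
    have hlt : q ^ (k+1) < 1 := pow_lt_one₀ hq0.le hq1 (by omega)
    apply (mult_aux hq0 hq1 (q ^ (k+1)) hpow hlt).congr
    intro j
    push_cast
    rw [← pow_add, ← pow_succ']
    congr 2
    omega
  have h := Multipliable.prod_mul_tprod_nat_mul'
    (f := fun j : ℕ => (1:ℂ) - (q:ℂ) * (q:ℂ)^j) (k := k) hm
  have h1 : qPochInf q ((q : ℂ) ^ (k + 1)) = ∏' i : ℕ, ((1:ℂ) - (q:ℂ) * (q:ℂ)^(i + k)) := by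
    unfold qPochInf
    apply tprod_congr
    intro i
    have : (q:ℂ) ^ (k+1) * (q:ℂ) ^ i = (q:ℂ) * (q:ℂ) ^ (i+k) := by
      rw [← pow_add, ← pow_succ']
      congr 1
      omega
    rw [this]
  rw [h1]
  exact h

lemma nat_half (n m : ℕ) :
    (m + n) * ((m + n) - 1) / 2 = n * (n - 1) / 2 + m * (m - 1) / 2 + n * m := by
  match n, m with
  | 0, m => simp
  | n+1, 0 => simp
  | n+1, m+1 =>
    obtain ⟨a, ha⟩ := Nat.even_mul_succ_self n
    obtain ⟨b, hb⟩ := Nat.even_mul_succ_self m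
    obtain ⟨c, hc⟩ := Nat.even_mul_succ_self (m+n+1)
    have h1 : (m + 1 + (n + 1)) * (m + 1 + (n + 1) - 1) = c + c := by
      rw [show m + 1 + (n + 1) - 1 = m + n + 1 by omega,
        show m + 1 + (n+1) = (m+n+1) + 1 by omega, Nat.mul_comm]
      exact hc
    have h2 : (n+1) * ((n+1) - 1) = a + a := by
      rw [show (n+1) - 1 = n by omega, Nat.mul_comm]; exact ha
    have h3 : (m+1) * ((m+1) - 1) = b + b := by
      rw [show (m+1) - 1 = m by omega, Nat.mul_comm]; exact hb
    rw [h1, h2, h3]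
    have hd : c + c = (a + a) + (b + b) + 2 * ((n+1) * (m+1)) := by
      rw [← hc, ← ha, ← hb]; ring
    generalize ht : (n+1) * (m+1) = t at *
    omega

lemma cast_half (N : ℕ) : ((N * (N - 1) / 2 : ℕ) : ℤ) = (N : ℤ) * ((N : ℤ) - 1) / 2 := by
  have h1 : (N : ℤ) * ((N : ℤ) - 1) = ((N * (N - 1) : ℕ) : ℤ) := by
    cases N with
    | zero => simp
    | succ M => push_cast [Nat.succ_sub_one]; ring
  rw [h1]
  generalize (N * (N - 1) : ℕ) = x
  omega

lemma Fterm_zero {q : ℝ} (hq0 : 0 < q) (n : ℕ) (z : ℂ) (k : ℕ) (hk : k < n) :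
    Fterm q z ((q : ℂ) ^ (1 - (n : ℤ))) k = 0 := by
  have hq : (q : ℂ) ≠ 0 := by
    simp only [ne_eq, Complex.ofReal_eq_zero]; exact hq0.ne'
  have hfac : (1 : ℂ) - ((q : ℂ) ^ k * (q : ℂ) ^ (1 - (n : ℤ))) * (q : ℂ) ^ (n - 1 - k) = 0 := by
    have : (q : ℂ) ^ k * (q : ℂ) ^ (1 - (n : ℤ)) * (q : ℂ) ^ (n - 1 - k) = 1 := by
      rw [← zpow_natCast (q : ℂ) k, ← zpow_natCast (q : ℂ) (n - 1 - k),
        ← zpow_add₀ hq, ← zpow_add₀ hq]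
      rw [show (k : ℤ) + (1 - (n : ℤ)) + ((n - 1 - k : ℕ) : ℤ) = 0 by omega, zpow_zero]
    rw [this]; ring
  have h0 : qPochInf q ((q : ℂ) ^ k * (q : ℂ) ^ (1 - (n : ℤ))) = 0 :=
    (hasProd_zero_of_eq_zero (n - 1 - k) hfac).tprod_eq
  simp [Fterm, h0]

lemma Fterm_shift {q : ℝ} (hq0 : 0 < q) (hq1 : q < 1) (n : ℕ) (z : ℂ) (m : ℕ) :
    Fterm q z ((q : ℂ) ^ (1 - (n : ℤ))) (m + n) =
      ((-1 : ℂ) ^ n * (q : ℂ) ^ (n * (n - 1) / 2) * z ^ n) *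
        Fterm q ((q : ℂ) ^ n * z) ((q : ℂ) ^ ((n : ℤ) + 1)) m := by
  have hq : (q : ℂ) ≠ 0 := by
    simp only [ne_eq, Complex.ofReal_eq_zero]; exact hq0.ne'
  have h1 : (q : ℂ) ^ (m + n) * (q : ℂ) ^ (1 - (n : ℤ)) = (q : ℂ) ^ (m + 1) := by
    rw [← zpow_natCast (q : ℂ) (m + n), ← zpow_add₀ hq, ← zpow_natCast (q : ℂ) (m + 1)]
    congr 1; push_cast; ring
  have h2 : (q : ℂ) ^ m * (q : ℂ) ^ ((n : ℤ) + 1) = (q : ℂ) ^ (m + n + 1) := by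
    rw [← zpow_natCast (q : ℂ) m, ← zpow_add₀ hq, ← zpow_natCast (q : ℂ) (m + n + 1)]
    congr 1
  have hD1 := qPoch_ne_zero hq0 hq1 (m + n)
  have hD2 := qPoch_ne_zero hq0 hq1 m
  have hP : qPochInf q ((q : ℂ) ^ (m + 1)) * qPoch q (q : ℂ) m
      = qPochInf q ((q : ℂ) ^ (m + n + 1)) * qPoch q (q : ℂ) (m + n) := by
    rw [mul_comm, mul_comm (qPochInf q ((q : ℂ) ^ (m + n + 1))),
      qPoch_mul_qPochInf hq0 hq1 m]
    exact (qPoch_mul_qPochInf hq0 hq1 (m + n)).symm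
  have he : (q : ℂ) ^ ((m + n) * ((m + n) - 1) / 2)
      = (q : ℂ) ^ (n * (n - 1) / 2) * (q : ℂ) ^ (m * (m - 1) / 2) * (q : ℂ) ^ (n * m) := by
    rw [← pow_add, ← pow_add, nat_half]
  unfold Fterm
  rw [h1, h2, he, ← mul_div_assoc, div_eq_div_iff hD1 hD2]
  linear_combination ((-1 : ℂ)) ^ (m + n) * (q : ℂ) ^ (n * (n - 1) / 2)
    * (q : ℂ) ^ (m * (m - 1) / 2) * (q : ℂ) ^ (n * m) * z ^ (m + n) * hP

lemma key {q : ℝ} (hq0 : 0 < q) (hq1 : q < 1) (n : ℕ) (z : ℂ) :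
    Fqb q z ((q : ℂ) ^ (1 - (n : ℤ))) =
      (-1 : ℂ) ^ n * (q : ℂ) ^ (n * (n - 1) / 2) * z ^ n *
        Fqb q ((q : ℂ) ^ n * z) ((q : ℂ) ^ ((n : ℤ) + 1)) := by
  unfold Fqb
  have hshift : ∑' k : ℕ, Fterm q z ((q : ℂ) ^ (1 - (n : ℤ))) k
      = ∑' m : ℕ, Fterm q z ((q : ℂ) ^ (1 - (n : ℤ))) (m + n) := by
    symm
    apply Function.Injective.tsum_eq (g := fun m : ℕ => m + n) (add_left_injective n)
    intro k hk
    rcases le_or_gt n k with h | h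
    · refine ⟨k - n, ?_⟩
      show k - n + n = k
      omega
    · exact absurd (Fterm_zero hq0 n z k h) hk
  rw [hshift]
  rw [tsum_congr (fun m => Fterm_shift hq0 hq1 n z m), tsum_mul_left]

/-- Remark 2.3: `F(z, q^{1-n}) = (-1)^n q^{n(n-1)/2} z^n F(q^n z, q^{n+1})` for all `n ∈ ℤ`. -/
theorem stmt2 (q : ℝ) (hq0 : 0 < q) (hq1 : q < 1) (n : ℤ) (z : ℂ) (hz : z ≠ 0) :
    Fqb q z ((q : ℂ) ^ (1 - n)) =
      (-1 : ℂ) ^ n * (q : ℂ) ^ (n * (n - 1) / 2) * z ^ n *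
        Fqb q ((q : ℂ) ^ n * z) ((q : ℂ) ^ (n + 1)) := by
  have hq : (q : ℂ) ≠ 0 := by
    simp only [ne_eq, Complex.ofReal_eq_zero]; exact hq0.ne'
  rcases le_or_gt 0 n with hn | hn
  · obtain ⟨N, rfl⟩ := Int.eq_ofNat_of_zero_le hn
    have hc : ((N : ℤ) * ((N : ℤ) - 1) / 2) = ((N * (N - 1) / 2 : ℕ) : ℤ) := (cast_half N).symm
    rw [hc, zpow_natCast ((-1 : ℂ)) N, zpow_natCast (q : ℂ) (N * (N - 1) / 2),
      zpow_natCast z N, zpow_natCast (q : ℂ) N]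
    exact key hq0 hq1 N z
  · obtain ⟨N, hN1, rfl⟩ : ∃ N : ℕ, 1 ≤ N ∧ n = -(N : ℤ) :=
      ⟨(-n).toNat, by omega, by omega⟩
    have hkey := key hq0 hq1 N ((q : ℂ) ^ (-(N : ℤ)) * z)
    have e2 : (q : ℂ) ^ (N : ℕ) * ((q : ℂ) ^ (-(N : ℤ)) * z) = z := by
      rw [← zpow_natCast (q : ℂ) N, ← mul_assoc, ← zpow_add₀ hq]
      simp
    rw [show (1 - (N : ℤ)) = -(N : ℤ) + 1 by ring, e2,
      show ((N : ℤ) + 1) = 1 - (-(N : ℤ)) by ring] at hkey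
    rw [hkey]
    have hexp : (-(N : ℤ)) * (-(N : ℤ) - 1) / 2 + ((N * (N - 1) / 2 : ℕ) : ℤ)
        + (-(N : ℤ)) * (N : ℤ) = 0 := by
      rw [cast_half]
      obtain ⟨a, ha⟩ := Int.even_mul_succ_self (N : ℤ)
      have ha' : (-(N : ℤ)) * (-(N : ℤ) - 1) = a + a := by rw [← ha]; ring
      obtain ⟨b, hb⟩ := Int.even_mul_succ_self ((N : ℤ) - 1)
      have hb' : (N : ℤ) * ((N : ℤ) - 1) = b + b := by
        rw [← hb]; ring
      have hs : a + a + (b + b) = 2 * ((N : ℤ) * (N : ℤ)) := by rw [← ha', ← hb']; ring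
      rw [ha', hb', show (-(N : ℤ)) * (N : ℤ) = -((N : ℤ) * (N : ℤ)) by ring]
      generalize (N : ℤ) * (N : ℤ) = t at hs ⊢
      omega
    have hm1 : (-1 : ℂ) ^ (-(N : ℤ)) * (-1 : ℂ) ^ ((N : ℤ)) = 1 := by
      rw [← zpow_add₀ (by norm_num : (-1 : ℂ) ≠ 0)]; simp
    have hz1 : z ^ (-(N : ℤ)) * z ^ ((N : ℤ)) = 1 := by
      rw [← zpow_add₀ hz]; simp
    have hq1' : (q : ℂ) ^ ((-(N : ℤ)) * (-(N : ℤ) - 1) / 2)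
        * (q : ℂ) ^ (((N * (N - 1) / 2 : ℕ) : ℤ))
        * (q : ℂ) ^ ((-(N : ℤ)) * (N : ℤ)) = 1 := by
      rw [← zpow_add₀ hq, ← zpow_add₀ hq, hexp, zpow_zero]
    have hcoef : ((-1 : ℂ) ^ (-(N : ℤ)) * (q : ℂ) ^ ((-(N : ℤ)) * (-(N : ℤ) - 1) / 2)
          * z ^ (-(N : ℤ)))
        * ((-1 : ℂ) ^ (N : ℕ) * (q : ℂ) ^ (N * (N - 1) / 2 : ℕ)
          * ((q : ℂ) ^ (-(N : ℤ)) * z) ^ (N : ℕ)) = 1 := by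
      rw [← zpow_natCast (-1 : ℂ) N, ← zpow_natCast (q : ℂ) (N * (N - 1) / 2),
        ← zpow_natCast ((q : ℂ) ^ (-(N : ℤ)) * z) N, mul_zpow, ← zpow_mul]
      calc ((-1 : ℂ) ^ (-(N : ℤ)) * (q : ℂ) ^ ((-(N : ℤ)) * (-(N : ℤ) - 1) / 2)
            * z ^ (-(N : ℤ)))
          * ((-1 : ℂ) ^ ((N : ℤ)) * (q : ℂ) ^ (((N * (N - 1) / 2 : ℕ) : ℤ))
            * ((q : ℂ) ^ ((-(N : ℤ)) * (N : ℤ)) * z ^ ((N : ℤ))))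
          = ((-1 : ℂ) ^ (-(N : ℤ)) * (-1 : ℂ) ^ ((N : ℤ)))
            * ((q : ℂ) ^ ((-(N : ℤ)) * (-(N : ℤ) - 1) / 2)
              * (q : ℂ) ^ (((N * (N - 1) / 2 : ℕ) : ℤ))
              * (q : ℂ) ^ ((-(N : ℤ)) * (N : ℤ)))
            * (z ^ (-(N : ℤ)) * z ^ ((N : ℤ))) := by ring
        _ = 1 := by rw [hm1, hz1, hq1']; ring
    linear_combination (-(Fqb q z ((q : ℂ) ^ (1 - -(N : ℤ))))) * hcoef
end

section
/- Let 0 < q < 1. For all z,t ∈ ℂ with z ≠ 0 and t ≠ 0, the bilateral series ∑_{n=-∞}^∞ t^n z^n q^{n(n-1)/2} H(-q^n z², q^{n+1}) / (q;q)_∞ converges absolutely and equals (-tz;q)_∞ (t^{-1}z;q)_∞. (In ₀φ₁ notation the n-th coefficient is z^n q^{n(n-1)/2} (q^{n+1};q)_∞ ₀φ₁(-;q^{n+1};q,-q^n z²)/(q;q)_∞, Jackson's second q-Bessel function.) -/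
open Complex Filter

/-- `G(z,w) = ∑ (q^k w;q)_∞ z^k / (q;q)_k`, so `G(z,w) = (w;q)_∞ ₂φ₁(0,0;w;q,z)` for `|z|<1`. -/
noncomputable def Gqb (q : ℝ) (z w : ℂ) : ℂ :=
  ∑' k : ℕ, qPochInf q ((q : ℂ) ^ k * w) * z ^ k / qPoch q (q : ℂ) k

/-- `H(z,w) = ∑ q^{k(k-1)} (q^k w;q)_∞ z^k / (q;q)_k`, so `H(z,w) = (w;q)_∞ ₀φ₁(-;w;q,z)`. -/
noncomputable def Hqb (q : ℝ) (z w : ℂ) : ℂ :=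
  ∑' k : ℕ, (q : ℂ) ^ (k * (k - 1)) * qPochInf q ((q : ℂ) ^ k * w) * z ^ k / qPoch q (q : ℂ) k

open Topology

noncomputable def rP (q : ℝ) (k : ℕ) : ℝ := ∏ j ∈ Finset.range k, (1 - q * q ^ j)
noncomputable def coefE (q : ℝ) (N k : ℕ) : ℂ :=
  (q:ℂ)^(k*(k-1)/2) * qPoch q (q:ℂ) N / (qPoch q (q:ℂ) k * qPoch q (q:ℂ) (N-k))

lemma tri_succ (k : ℕ) : (k+1)*k/2 = k*(k-1)/2 + k := by
  have h1 : (k+1)*k/2 = (k+1).choose 2 := by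
    rw [Nat.choose_two_right]; simp
  have h2 : k*(k-1)/2 = k.choose 2 := (Nat.choose_two_right k).symm
  rw [h1, h2, Nat.choose_succ_succ, Nat.choose_one_right, add_comm]

section
variable {q : ℝ} (hq0 : 0 < q) (hq1 : q < 1)

include hq0 hq1 in
lemma summable_log_qp (a : ℂ) : Summable fun j : ℕ => Complex.log (1 - a * (q:ℂ)^j) := by
  have hto : Tendsto (fun j : ℕ => ‖a‖ * q ^ j) atTop (𝓝 0) := by
    simpa using (tendsto_pow_atTop_nhds_zero_of_lt_one hq0.le hq1).const_mul ‖a‖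
  have hsum : Summable fun j : ℕ => 3/2 * (‖a‖ * q ^ j) :=
    ((summable_geometric_of_lt_one hq0.le hq1).mul_left ‖a‖).mul_left _
  apply Summable.of_norm_bounded_eventually hsum
  rw [Nat.cofinite_eq_atTop]
  filter_upwards [hto.eventually_le_const (by norm_num : (0:ℝ) < 1/2)] with j hj
  have hn : ‖-(a * (q:ℂ)^j)‖ ≤ 1/2 := by
    rw [norm_neg, norm_mul, norm_pow, Complex.norm_real, Real.norm_eq_abs,
      abs_of_pos hq0]
    exact hj
  have := Complex.norm_log_one_add_half_le_self hn
  rw [show (1 : ℂ) + -(a * (q:ℂ)^j) = 1 - a * (q:ℂ)^j by ring] at this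
  refine this.trans ?_
  rw [norm_neg, norm_mul, norm_pow, Complex.norm_real, Real.norm_eq_abs, abs_of_pos hq0]

include hq0 hq1 in
lemma multipliable_qp (a : ℂ) : Multipliable fun j : ℕ => 1 - a * (q:ℂ)^j := by
  by_cases h : ∃ j, 1 - a * (q:ℂ)^j = 0
  · exact ⟨0, hasProd_zero_of_exists_eq_zero h⟩
  · push_neg at h
    exact Complex.multipliable_of_summable_log (summable_log_qp hq0 hq1 a)

include hq0 hq1 in
lemma qPochInf_ne_zero {a : ℂ} (h : ∀ j : ℕ, 1 - a * (q:ℂ)^j ≠ 0) : qPochInf q a ≠ 0 := by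
  have h2 := Complex.cexp_tsum_eq_tprod (f := fun j => 1 - a * (q:ℂ)^j) h
      (summable_log_qp hq0 hq1 a)
  rw [qPochInf, ← h2]
  exact Complex.exp_ne_zero _

include hq0 hq1 in
lemma qPochInf_split (a : ℂ) (k : ℕ) :
    qPochInf q a = qPoch q a k * qPochInf q ((q:ℂ)^k * a) := by
  have hm : Multipliable (fun n : ℕ => 1 - a*(q:ℂ)^(n+k)) :=
    (multipliable_qp hq0 hq1 ((q:ℂ)^k*a)).congr fun j => by rw [pow_add]; ring
  have h := Multipliable.prod_mul_tprod_nat_mul' (f := fun j => 1 - a*(q:ℂ)^j) hm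
  have h2 : (∏' i : ℕ, (1 - a * (q:ℂ)^(i+k))) = qPochInf q ((q:ℂ)^k * a) :=
    tprod_congr fun j => by rw [pow_add]; ring
  rw [qPochInf, ← h, qPoch, h2]


lemma qPoch_q_eq (k : ℕ) : qPoch q (q:ℂ) k = ((rP q k : ℝ) : ℂ) := by
  rw [qPoch, rP]
  push_cast
  rfl

include hq0 hq1 in
lemma rP_pos (k : ℕ) : 0 < rP q k := by
  refine Finset.prod_pos fun j _ => ?_
  have : q * q ^ j < 1 := by
    calc q * q ^ j ≤ q * 1 := by
          exact mul_le_mul_of_nonneg_left (pow_le_one₀ hq0.le hq1.le) hq0.le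
      _ < 1 := by linarith
  linarith

include hq0 hq1 in
lemma rP_antitone : Antitone (rP q) := by
  refine antitone_nat_of_succ_le fun k => ?_
  rw [rP, Finset.prod_range_succ, ← rP]
  have h1 : 0 < q * q ^ k := mul_pos hq0 (pow_pos hq0 k)
  nlinarith [rP_pos hq0 hq1 k]

include hq0 hq1 in
lemma norm_qPoch (k : ℕ) : ‖qPoch q (q:ℂ) k‖ = rP q k := by
  rw [qPoch_q_eq, Complex.norm_real, Real.norm_eq_abs, abs_of_pos (rP_pos hq0 hq1 k)]

include hq0 hq1 in
lemma qPoch_q_ne_zero (k : ℕ) : qPoch q (q:ℂ) k ≠ 0 := by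
  rw [qPoch_q_eq]
  exact_mod_cast (rP_pos hq0 hq1 k).ne'

lemma hasProd_zero_of_exists_eq_zero' {f : ℕ → ℂ} (h : ∃ j, f j = 0) : HasProd f 0 := by
  obtain ⟨j0, hj0⟩ := h
  refine Tendsto.congr' ?_ (tendsto_const_nhds (x := (0:ℂ)))
  filter_upwards [eventually_ge_atTop ({j0} : Finset ℕ)] with s hs
  exact (Finset.prod_eq_zero (hs (Finset.mem_singleton_self j0)) hj0).symm

include hq0 in
lemma qPochInf_zpow_eq_zero {m : ℤ} (hm : m ≤ 0) : qPochInf q ((q:ℂ)^m) = 0 := by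
  have hQ : (q:ℂ) ≠ 0 := by exact_mod_cast hq0.ne'
  have hfac : 1 - (q:ℂ)^m * (q:ℂ)^((-m).toNat) = 0 := by
    rw [← zpow_natCast (q:ℂ) ((-m).toNat), ← zpow_add₀ hQ,
      Int.toNat_of_nonneg (by omega : 0 ≤ -m), add_neg_cancel, zpow_zero, sub_self]
  exact (hasProd_zero_of_exists_eq_zero' ⟨(-m).toNat, hfac⟩).tprod_eq

include hq0 hq1 in
lemma q_zpow_lt_one {m : ℤ} (hm : 1 ≤ m) :
    ∀ j : ℕ, 1 - (q:ℂ)^m * (q:ℂ)^j ≠ 0 := by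
  intro i
  have hQ : (q:ℂ)^m * (q:ℂ)^i = (((q^m * q^i : ℝ)) : ℂ) := by push_cast; rfl
  rw [hQ, sub_ne_zero]
  have h1 : q ^ m * q ^ i < 1 := by
    have h2 : q ^ m ≤ q := by
      calc q ^ m ≤ q ^ (1:ℤ) := zpow_le_zpow_right_of_le_one₀ hq0 hq1.le hm
        _ = q := zpow_one q
    have h3 : q ^ i ≤ 1 := pow_le_one₀ hq0.le hq1.le
    have h4 : (0:ℝ) < q ^ m := zpow_pos hq0 m
    nlinarith
  exact_mod_cast h1.ne'
include hq0 hq1 in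
lemma one_sub_ne (i : ℕ) : (1:ℂ) - (q:ℂ) * (q:ℂ)^i ≠ 0 := by
  have h : q * q ^ i < 1 := by nlinarith [pow_le_one₀ hq0.le hq1.le (n := i), pow_pos hq0 i]
  rw [sub_ne_zero, show (q:ℂ) * (q:ℂ)^i = ((q * q^i : ℝ) : ℂ) by push_cast; rfl]
  exact_mod_cast h.ne'

lemma qPoch_succ (a : ℂ) (k : ℕ) :
    qPoch q a (k+1) = qPoch q a k * (1 - a * (q:ℂ)^k) := Finset.prod_range_succ _ _

include hq0 hq1 in
lemma coefE_zero (N : ℕ) : coefE q N 0 = 1 := by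
  rw [coefE]
  norm_num
  rw [show qPoch q (q:ℂ) 0 = 1 from Finset.prod_range_zero _, one_mul,
    div_self (qPoch_q_ne_zero hq0 hq1 N)]

include hq0 hq1 in
lemma coefE_self (N : ℕ) : coefE q N N = (q:ℂ)^(N*(N-1)/2) := by
  rw [coefE, Nat.sub_self, show qPoch q (q:ℂ) 0 = 1 from Finset.prod_range_zero _, mul_one,
    mul_div_assoc, div_self (qPoch_q_ne_zero hq0 hq1 N), mul_one]

include hq0 hq1 in
lemma pascalE {N k : ℕ} (h : k < N) :
    coefE q (N+1) (k+1) = coefE q N (k+1) + coefE q N k * (q:ℂ)^N := by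
  obtain ⟨m, rfl⟩ : ∃ m, N = k + m + 1 := ⟨N - k - 1, by omega⟩
  simp only [coefE, show k+m+1+1-(k+1) = m+1 by omega, show k+m+1-(k+1) = m by omega,
    show k+m+1-k = m+1 by omega, Nat.add_sub_cancel, tri_succ k]
  rw [show k+m+1+1 = (k+m+1)+1 by ring, qPoch_succ ((q:ℂ)) (k+m+1), qPoch_succ ((q:ℂ)) k,
    qPoch_succ ((q:ℂ)) m]
  have h1 := one_sub_ne hq0 hq1 (k+m+1)
  have h2 := one_sub_ne hq0 hq1 k
  have h3 := one_sub_ne hq0 hq1 m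
  have h4 := qPoch_q_ne_zero hq0 hq1 k
  have h5 := qPoch_q_ne_zero hq0 hq1 m
  field_simp
  ring

include hq0 hq1 in
lemma qbinom (a : ℂ) (N : ℕ) :
    ∏ j ∈ Finset.range N, (1 + a*(q:ℂ)^j) = ∑ k ∈ Finset.range (N+1), coefE q N k * a^k := by
  induction N with
  | zero =>
    simp [coefE, qPoch]
  | succ N ih =>
    rw [Finset.prod_range_succ, ih, mul_add, mul_one, Finset.sum_mul]
    rw [Finset.sum_range_succ' (fun k => coefE q (N+1) k * a^k) (N+1)]
    rw [Finset.sum_range_succ (fun k => coefE q (N+1) (k+1) * a^(k+1)) N]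
    rw [Finset.sum_range_succ' (fun k => coefE q N k * a^k) N]
    rw [Finset.sum_range_succ (fun k => coefE q N k * a^k * (a * (q:ℂ)^N)) N]
    have hmid : ∀ k ∈ Finset.range N,
        coefE q (N+1) (k+1) * a^(k+1) =
          coefE q N (k+1) * a^(k+1) + coefE q N k * a^k * (a * (q:ℂ)^N) := by
      intro k hk
      rw [pascalE hq0 hq1 (Finset.mem_range.mp hk)]
      ring
    rw [Finset.sum_congr rfl hmid, Finset.sum_add_distrib]
    rw [coefE_zero hq0 hq1, coefE_zero hq0 hq1]
    have htop : coefE q N N * a^N * (a * (q:ℂ)^N) = coefE q (N+1) (N+1) * a^(N+1) := by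
      rw [coefE_self hq0 hq1, coefE_self hq0 hq1, Nat.add_sub_cancel, tri_succ N, pow_add]
      ring
    rw [← htop]
    ring
include hq0 hq1 in
lemma summable_bound {B : ℝ} (hB : 0 ≤ B) :
    Summable fun k : ℕ => q^(k*(k-1)/2) * B^k / rP q k := by
  refine summable_of_ratio_norm_eventually_le (r := 1/2) (by norm_num) ?_
  have hto : Tendsto (fun k : ℕ => q^k * B) atTop (𝓝 0) := by
    simpa using (tendsto_pow_atTop_nhds_zero_of_lt_one hq0.le hq1).mul_const B
  filter_upwards [hto.eventually_le_const (by linarith : (0:ℝ) < (1-q)/2)] with k hk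
  have hrp := rP_pos hq0 hq1 k
  have hq' : q * q^k ≤ q := by nlinarith [pow_le_one₀ hq0.le hq1.le (n := k), pow_pos hq0 k]
  have hqq : 0 < 1 - q*q^k := by linarith
  have e1 : q^((k+1)*k/2) * B^(k+1) / rP q (k+1)
      = (q^(k*(k-1)/2) * B^k / rP q k) * (q^k*B/(1-q*q^k)) := by
    rw [tri_succ, pow_add, pow_succ, rP, Finset.prod_range_succ, ← rP]
    field_simp
  have hnn : 0 ≤ q^(k*(k-1)/2) * B^k / rP q k := by positivity
  rw [Real.norm_eq_abs, Real.norm_eq_abs]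
  simp only [Nat.add_sub_cancel]
  rw [e1, _root_.abs_of_nonneg (mul_nonneg hnn (by positivity)), _root_.abs_of_nonneg hnn]
  have hlast : q^k*B/(1-q*q^k) ≤ 1/2 := by
    rw [div_le_iff₀ hqq]
    nlinarith
  calc q ^ (k * (k - 1) / 2) * B ^ k / rP q k * (q ^ k * B / (1 - q * q ^ k))
      ≤ q ^ (k * (k - 1) / 2) * B ^ k / rP q k * (1/2) := by
        exact mul_le_mul_of_nonneg_left hlast hnn
    _ = 1/2 * (q ^ (k * (k - 1) / 2) * B ^ k / rP q k) := by ring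

include hq0 hq1 in
theorem euler (a : ℂ) :
    qPochInf q (-a) = ∑' k : ℕ, (q:ℂ)^(k*(k-1)/2) * a^k / qPoch q (q:ℂ) k := by
  have hQnorm : ‖(q:ℂ)‖ < 1 := by
    rw [Complex.norm_real, Real.norm_eq_abs, abs_of_pos hq0]; exact hq1
  have h1' : Tendsto (fun N => ∏ j ∈ Finset.range N, (1 + a * (q:ℂ)^j)) atTop
      (𝓝 (qPochInf q (-a))) := by
    have h1 := (multipliable_qp hq0 hq1 (-a)).hasProd.tendsto_prod_nat
    exact h1.congr (fun N => Finset.prod_congr rfl fun j _ => by ring)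
  have h2 : ∀ N, (∏ j ∈ Finset.range N, (1 + a * (q:ℂ)^j))
      = ∑' k, (if k ≤ N then coefE q N k * a^k else 0) := by
    intro N
    rw [qbinom hq0 hq1 a N, tsum_eq_sum (s := Finset.range (N+1))
      (fun k hk => if_neg (by simpa [Nat.lt_succ_iff] using hk))]
    exact Finset.sum_congr rfl fun k hk => (if_pos (by simpa [Nat.lt_succ_iff] using hk)).symm
  have h3 : Tendsto (fun N => ∑' k, (if k ≤ N then coefE q N k * a^k else 0)) atTop
      (𝓝 (∑' k, (q:ℂ)^(k*(k-1)/2) * a^k / qPoch q (q:ℂ) k)) := by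
    apply tendsto_tsum_of_dominated_convergence
      (bound := fun k => q^(k*(k-1)/2) * ‖a‖^k / rP q k)
      (summable_bound hq0 hq1 (norm_nonneg a))
    · intro k
      rw [← tendsto_add_atTop_iff_nat k]
      have heq : ∀ M : ℕ, (if k ≤ M + k then coefE q (M+k) k * a^k else 0)
          = ((q:ℂ)^(k*(k-1)/2) * a^k / qPoch q (q:ℂ) k)
            * ∏ i ∈ Finset.range k, (1 - (q:ℂ)*(q:ℂ)^(M+i)) := by
        intro M
        rw [if_pos (Nat.le_add_left k M), coefE, Nat.add_sub_cancel]
        have hsplit : qPoch q (q:ℂ) (M+k)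
            = qPoch q (q:ℂ) M * ∏ i ∈ Finset.range k, (1 - (q:ℂ)*(q:ℂ)^(M+i)) := by
          rw [qPoch, Finset.prod_range_add]
          rfl
        rw [hsplit]
        have h4 := qPoch_q_ne_zero hq0 hq1 k
        have h5 := qPoch_q_ne_zero hq0 hq1 M
        field_simp
      have hprod : Tendsto (fun M => ∏ i ∈ Finset.range k, (1 - (q:ℂ)*(q:ℂ)^(M+i))) atTop
          (𝓝 1) := by
        have h6 : Tendsto (fun M : ℕ => (q:ℂ)^M) atTop (𝓝 0) :=
          tendsto_pow_atTop_nhds_zero_of_norm_lt_one hQnorm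
        have h7 : ∀ i : ℕ, Tendsto (fun M : ℕ => 1 - (q:ℂ)*(q:ℂ)^(M+i)) atTop (𝓝 1) := by
          intro i
          have := ((h6.mul_const ((q:ℂ)^i)).const_mul (q:ℂ)).const_sub 1
          simp only [zero_mul, mul_zero, sub_zero] at this
          exact this.congr fun M => by rw [pow_add]
        have := tendsto_finset_prod (Finset.range k)
          (fun i _ => h7 i)
        simpa using this
      refine Tendsto.congr (fun M => (heq M).symm) ?_
      simpa using tendsto_const_nhds.mul hprod
    · filter_upwards with N k
      by_cases hk : k ≤ N
      · rw [if_pos hk, norm_mul, coefE, norm_div, norm_mul, norm_mul, norm_pow, norm_pow,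
          Complex.norm_real, Real.norm_eq_abs, abs_of_pos hq0,
          norm_qPoch hq0 hq1, norm_qPoch hq0 hq1, norm_qPoch hq0 hq1]
        have h5 : rP q N ≤ rP q (N-k) := rP_antitone hq0 hq1 (Nat.sub_le N k)
        have e2 : q^(k*(k-1)/2) * ‖a‖^k / rP q k
            = q ^ (k*(k-1)/2) * rP q (N-k) / (rP q k * rP q (N-k)) * ‖a‖^k := by
          field_simp [(rP_pos hq0 hq1 (N-k)).ne', (rP_pos hq0 hq1 k).ne']
        rw [e2]
        gcongr
        all_goals first
          | exact (mul_pos (rP_pos hq0 hq1 k) (rP_pos hq0 hq1 (N-k))).le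
          | exact (rP_pos hq0 hq1 N).le
          | exact h5
      · rw [if_neg hk, norm_zero]
        exact div_nonneg (by positivity) (rP_pos hq0 hq1 k).le
  exact tendsto_nhds_unique (h1'.congr h2) h3

lemma zhalf (n : ℤ) : 2 * (n*(n-1)/2) = n*(n-1) := by
  have h : Even ((n-1)*((n-1)+1)) := Int.even_mul_succ_self (n-1)
  rw [sub_add_cancel, mul_comm] at h
  obtain ⟨c, hc⟩ := h
  omega

lemma cast_ssub (s : ℕ) : ((s*(s-1) : ℕ) : ℤ) = (s:ℤ)*((s:ℤ)-1) := by
  cases s with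
  | zero => decide
  | succ m =>
    rw [Nat.succ_sub_one]
    push_cast
    ring

lemma nat_even_tri (r : ℕ) : 2 * (r*(r-1)/2) = r*(r-1) := by
  have h : 2 ∣ r*(r-1) := by
    cases r with
    | zero => simp
    | succ m =>
      rw [Nat.succ_sub_one, mul_comm]
      exact (Nat.even_mul_succ_self m).two_dvd
  omega

lemma cast_tri (r : ℕ) : ((r*(r-1)/2 : ℕ) : ℤ) = (r:ℤ)*((r:ℤ)-1)/2 := by
  have h1 : (2:ℤ) * ((r*(r-1)/2 : ℕ):ℤ) = ((r*(r-1):ℕ):ℤ) := by exact_mod_cast nat_even_tri r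
  have h2 := zhalf (r:ℤ)
  have h3 := cast_ssub r
  linarith

include hq0 hq1 in
lemma norm_qterm (b : ℂ) (k : ℕ) :
    ‖(q:ℂ)^(k*(k-1)/2) * b^k / qPoch q (q:ℂ) k‖ = q^(k*(k-1)/2) * ‖b‖^k / rP q k := by
  rw [norm_div, norm_mul, norm_pow, norm_pow, Complex.norm_real, Real.norm_eq_abs,
    abs_of_pos hq0, norm_qPoch hq0 hq1]

include hq0 hq1 in
lemma summable_qnorm (b : ℂ) :
    Summable fun k : ℕ => ‖(q:ℂ)^(k*(k-1)/2) * b^k / qPoch q (q:ℂ) k‖ :=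
  (summable_bound hq0 hq1 (norm_nonneg b)).congr fun k => (norm_qterm hq0 hq1 b k).symm

include hq0 hq1 in
lemma keyF (z t : ℂ) (hz : z ≠ 0) (ht : t ≠ 0) (r s : ℕ) :
    (t^((r:ℤ)-s) * z^((r:ℤ)-s) * (q:ℂ)^(((r:ℤ)-s)*(((r:ℤ)-s)-1)/2) / qPochInf q (q:ℂ)) *
      ((q:ℂ)^(s*(s-1)) * qPochInf q ((q:ℂ)^s * (q:ℂ)^(((r:ℤ)-s)+1)) *
        (-((q:ℂ)^((r:ℤ)-s))*z^2)^s / qPoch q (q:ℂ) s)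
    = ((q:ℂ)^(r*(r-1)/2) * (t*z)^r / qPoch q (q:ℂ) r) *
      ((q:ℂ)^(s*(s-1)/2) * (-(t⁻¹*z))^s / qPoch q (q:ℂ) s) := by
  have hQ : (q:ℂ) ≠ 0 := by exact_mod_cast hq0.ne'
  have hP : qPochInf q (q:ℂ) ≠ 0 := qPochInf_ne_zero hq0 hq1 (one_sub_ne hq0 hq1)
  have hw : (q:ℂ)^(s:ℕ) * (q:ℂ)^(((r:ℤ)-s)+1) = (q:ℂ)^((r:ℤ)+1) := by
    rw [← zpow_natCast (q:ℂ) s, ← zpow_add₀ hQ]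
    congr 1
    ring
  have hv : qPochInf q ((q:ℂ)^((r:ℤ)+1)) = qPochInf q (q:ℂ) / qPoch q (q:ℂ) r := by
    rw [eq_div_iff (qPoch_q_ne_zero hq0 hq1 r), show ((r:ℤ)+1) = ((r+1:ℕ):ℤ) by push_cast; ring,
      zpow_natCast, pow_succ, mul_comm (qPochInf _ _)]
    exact (qPochInf_split hq0 hq1 (q:ℂ) r).symm
  have ht' : t^((r:ℤ)-s) = t^r * (t^s)⁻¹ := by
    rw [zpow_sub₀ ht, zpow_natCast, zpow_natCast, div_eq_mul_inv]
  have hz' : z^((r:ℤ)-s) = z^r * (z^s)⁻¹ := by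
    rw [zpow_sub₀ hz, zpow_natCast, zpow_natCast, div_eq_mul_inv]
  have hneg : (-((q:ℂ)^((r:ℤ)-s))*z^2)^s = (-1:ℂ)^s * (q:ℂ)^(((r:ℤ)-s)*s) * (z^s)^2 := by
    rw [show -((q:ℂ)^((r:ℤ)-s))*z^2 = (-1) * ((q:ℂ)^((r:ℤ)-s) * z^2) by ring, mul_pow, mul_pow,
      ← zpow_natCast ((q:ℂ)^((r:ℤ)-s)) s, ← zpow_mul, ← pow_mul, ← pow_mul,
      mul_comm 2 s, pow_mul]
    ring
  have hexp : (q:ℂ)^(((r:ℤ)-s)*(((r:ℤ)-s)-1)/2)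
      = (q:ℂ)^(r*(r-1)/2:ℕ) * (q:ℂ)^(s*(s-1)/2:ℕ)
        * ((q:ℂ)^(s*(s-1):ℕ))⁻¹ * ((q:ℂ)^(((r:ℤ)-s)*s))⁻¹ := by
    have e1 : ((r:ℤ)-s)*(((r:ℤ)-s)-1)/2
        = ((r*(r-1)/2:ℕ):ℤ) + ((s*(s-1)/2:ℕ):ℤ) - ((s*(s-1):ℕ):ℤ) - (((r:ℤ)-s)*s) := by
      rw [cast_tri, cast_tri, cast_ssub]
      have hpoly : ((r:ℤ)-s)*(((r:ℤ)-s)-1) + 2*((s:ℤ)*((s:ℤ)-1)) + 2*(((r:ℤ)-s)*s)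
          = (r:ℤ)*((r:ℤ)-1) + (s:ℤ)*((s:ℤ)-1) := by ring
      have h1 := zhalf ((r:ℤ)-s)
      have h2 := zhalf (r:ℤ)
      have h3 := zhalf (s:ℤ)
      linarith
    rw [e1, zpow_sub₀ hQ, zpow_sub₀ hQ, zpow_add₀ hQ, zpow_natCast, zpow_natCast, zpow_natCast,
      div_eq_mul_inv, div_eq_mul_inv]
  have hns : (-(t⁻¹*z))^s = (-1:ℂ)^s * (t^s)⁻¹ * z^s := by
    rw [show -(t⁻¹*z) = (-1) * t⁻¹ * z by ring, mul_pow, mul_pow, inv_pow]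
  rw [hw, hv, ht', hz', hneg, hexp, hns, mul_pow]
  have hts : t^s ≠ 0 := pow_ne_zero s ht
  have hzs : z^s ≠ 0 := pow_ne_zero s hz
  have hqs : (q:ℂ)^(s*(s-1):ℕ) ≠ 0 := pow_ne_zero _ hQ
  have hqrs : (q:ℂ)^(((r:ℤ)-s)*s) ≠ 0 := zpow_ne_zero _ hQ
  have hpr := qPoch_q_ne_zero hq0 hq1 r
  have hps := qPoch_q_ne_zero hq0 hq1 s
  have hones : ((q:ℂ)^(s*(s-1)) * ((q:ℂ)^(s*(s-1)))⁻¹) * (((q:ℂ)^(((r:ℤ)-s)*s)) * ((q:ℂ)^(((r:ℤ)-s)*s))⁻¹)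
      * (qPochInf q (q:ℂ) * (qPochInf q (q:ℂ))⁻¹) * (z^s * (z^s)⁻¹) = 1 := by
    rw [mul_inv_cancel₀ hqs, mul_inv_cancel₀ hqrs, mul_inv_cancel₀ hP, mul_inv_cancel₀ hzs]
    norm_num
  calc t ^ r * (t ^ s)⁻¹ * (z ^ r * (z ^ s)⁻¹) *
          ((q:ℂ) ^ (r * (r - 1) / 2) * (q:ℂ) ^ (s * (s - 1) / 2) * ((q:ℂ) ^ (s * (s - 1)))⁻¹ *
            ((q:ℂ) ^ (((r:ℤ) - (s:ℤ)) * (s:ℤ)))⁻¹) /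
        qPochInf q (q:ℂ) *
      ((q:ℂ) ^ (s * (s - 1)) * (qPochInf q (q:ℂ) / qPoch q (q:ℂ) r) *
        ((-1) ^ s * (q:ℂ) ^ (((r:ℤ) - (s:ℤ)) * (s:ℤ)) * (z ^ s) ^ 2) / qPoch q (q:ℂ) s)
      = ((q:ℂ) ^ (r * (r - 1) / 2) * (t ^ r * z ^ r) / qPoch q (q:ℂ) r *
          ((q:ℂ) ^ (s * (s - 1) / 2) * ((-1) ^ s * (t ^ s)⁻¹ * z ^ s) / qPoch q (q:ℂ) s)) *
        (((q:ℂ)^(s*(s-1)) * ((q:ℂ)^(s*(s-1)))⁻¹) * (((q:ℂ)^(((r:ℤ)-s)*s)) * ((q:ℂ)^(((r:ℤ)-s)*s))⁻¹)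
          * (qPochInf q (q:ℂ) * (qPochInf q (q:ℂ))⁻¹) * (z^s * (z^s)⁻¹)) := by
        ring
    _ = (q:ℂ) ^ (r * (r - 1) / 2) * (t ^ r * z ^ r) / qPoch q (q:ℂ) r *
          ((q:ℂ) ^ (s * (s - 1) / 2) * ((-1) ^ s * (t ^ s)⁻¹ * z ^ s) / qPoch q (q:ℂ) s) := by
        rw [hones, mul_one]

end

/-- Generating function (2.13) for Jackson's second q-Bessel function:
`(-tz;q)_∞(t⁻¹z;q)_∞ = ∑_{n∈ℤ} tⁿ zⁿ q^{n(n-1)/2} (q^{n+1};q)_∞ ₀φ₁(-;q^{n+1};q,-qⁿz²)/(q;q)_∞`,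
with absolute convergence. -/
theorem stmt8 (q : ℝ) (hq0 : 0 < q) (hq1 : q < 1) (z t : ℂ) (hz : z ≠ 0) (ht : t ≠ 0) :
    (Summable fun n : ℤ =>
      ‖t ^ n * z ^ n * (q : ℂ) ^ (n * (n - 1) / 2) *
        Hqb q (-((q : ℂ) ^ n) * z ^ 2) ((q : ℂ) ^ (n + 1)) / qPochInf q (q : ℂ)‖) ∧
    ∑' n : ℤ, t ^ n * z ^ n * (q : ℂ) ^ (n * (n - 1) / 2) *
        Hqb q (-((q : ℂ) ^ n) * z ^ 2) ((q : ℂ) ^ (n + 1)) / qPochInf q (q : ℂ) =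
      qPochInf q (-t * z) * qPochInf q (t⁻¹ * z) := by
  have hQ : (q:ℂ) ≠ 0 := by exact_mod_cast hq0.ne'
  have hP : qPochInf q (q:ℂ) ≠ 0 := qPochInf_ne_zero hq0 hq1 (one_sub_ne hq0 hq1)
  set g : ℕ → ℂ := fun r => (q:ℂ)^(r*(r-1)/2) * (t*z)^r / qPoch q (q:ℂ) r with hgdef
  set h : ℕ → ℂ := fun s => (q:ℂ)^(s*(s-1)/2) * (-(t⁻¹*z))^s / qPoch q (q:ℂ) s with hhdef
  set F : ℤ × ℕ → ℂ := fun p =>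
    (t^p.1 * z^p.1 * (q:ℂ)^(p.1*(p.1-1)/2) / qPochInf q (q:ℂ)) *
      ((q:ℂ)^(p.2*(p.2-1)) * qPochInf q ((q:ℂ)^p.2 * (q:ℂ)^(p.1+1)) * (-((q:ℂ)^p.1)*z^2)^p.2 /
        qPoch q (q:ℂ) p.2) with hFdef
  set e : ℕ × ℕ → ℤ × ℕ := fun p => (((p.1:ℤ) - p.2, p.2) : ℤ × ℕ) with hedef
  have hA : ∀ n : ℤ, t^n * z^n * (q:ℂ)^(n*(n-1)/2) *
      Hqb q (-((q:ℂ)^n) * z^2) ((q:ℂ)^(n+1)) / qPochInf q (q:ℂ) = ∑' k : ℕ, F (n, k) := by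
    intro n
    have hrw : ∀ (c P S : ℂ), c * S / P = (c/P) * S := fun c P S => by ring
    rw [Hqb, hrw, ← tsum_mul_left]
  have hkey : ∀ p : ℕ × ℕ, F (e p) = g p.1 * h p.2 := by
    intro p
    exact keyF hq0 hq1 z t hz ht p.1 p.2
  have hgs : Summable fun r => ‖g r‖ := summable_qnorm hq0 hq1 (t*z)
  have hhs : Summable fun s => ‖h s‖ := summable_qnorm hq0 hq1 (-(t⁻¹*z))
  have hGH : Summable fun p : ℕ × ℕ => ‖g p.1 * h p.2‖ := hgs.mul_norm hhs
  have he : Function.Injective e := by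
    intro p1 p2 hp
    have h1 := congrArg Prod.fst hp
    have h2 := congrArg Prod.snd hp
    simp only [hedef] at h1 h2
    exact Prod.ext (by omega) h2
  have hvanish : ∀ p : ℤ × ℕ, p ∉ Set.range e → F p = 0 := by
    intro ⟨n, k⟩ hp
    have hnk : n + k < 0 := by
      by_contra hnk
      push_neg at hnk
      refine hp ⟨((n + k).toNat, k), ?_⟩
      simp only [hedef, Prod.mk.injEq]
      exact ⟨by omega, trivial⟩
    have hzero : qPochInf q ((q:ℂ)^(k:ℕ) * (q:ℂ)^(n+1)) = 0 := by
      rw [show (q:ℂ)^(k:ℕ) * (q:ℂ)^(n+1) = (q:ℂ)^((k:ℤ)+(n+1)) by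
        rw [← zpow_natCast (q:ℂ) k, ← zpow_add₀ hQ]]
      exact qPochInf_zpow_eq_zero hq0 (by omega)
    simp [hFdef, hzero]
  have hFnorm : Summable fun p : ℤ × ℕ => ‖F p‖ := by
    refine (he.summable_iff ?_).mp (hGH.congr fun p => ?_)
    · intro p hp
      rw [hvanish p hp, norm_zero]
    · rw [Function.comp_apply, hkey p]
  have hFsum : Summable F := hFnorm.of_norm
  have hsupp : Function.support F ⊆ Set.range e := by
    intro p hp
    by_contra hc
    exact hp (hvanish p hc)
  constructor
  · have h1 : Summable fun n : ℤ => ∑' k : ℕ, ‖F (n, k)‖ :=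
      ((summable_prod_of_nonneg (fun _ => norm_nonneg _)).mp hFnorm).2
    refine Summable.of_nonneg_of_le (fun n => norm_nonneg _) (fun n => ?_) h1
    rw [hA n]
    exact norm_tsum_le_tsum_norm (hFnorm.prod_factor n)
  · rw [tsum_congr hA, ← Summable.tsum_prod' hFsum (fun n => hFsum.prod_factor n), ← he.tsum_eq hsupp,
      tsum_congr hkey, ← tsum_mul_tsum_of_summable_norm hgs hhs]
    have hg1 : (∑' r : ℕ, g r) = qPochInf q (-t * z) := by
      rw [neg_mul]
      exact (euler hq0 hq1 (t*z)).symm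
    have hh1 : (∑' s : ℕ, h s) = qPochInf q (t⁻¹ * z) := by
      have h3 := euler hq0 hq1 (-(t⁻¹*z))
      rw [neg_neg] at h3
      exact h3.symm
    rw [hg1, hh1]
end
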